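/- arXiv:2205.13355 — 2 statements merged into one kernel-verified Lean document; each statement's English description precedes it below -/
import Mathlib

section
/- Let A = W Λ Wᵀ be an eigendecomposition of an n×n real symmetric positive semidefinite matrix A, where W is orthogonal and Λ = diag(λ_1, …, λ_n) with λ_1 ≥ λ_2 ≥ … ≥ λ_n ≥ 0. Fix integers k ≥ 1 and j ≥ 1 with jk ≤ n, and for i = 1, …, j let W_i ∈ ℝ^{n×k} consist of columns (i−1)k+1 through ik of W. Let X ∈ ℝ^{n×k} be such that XᵀAX is invertible and Σ_{i=1}^{j} λ_{ik} σ_min(W_iᵀX)² > 0. Then ‖A X (XᵀAX)^{-1}‖₂ ≤ λ_1^{1/2} / ( Σ_{i=1}^{j} λ_{ik} σ_min(W_iᵀX)² )^{1/2}. -/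
/-! With `B = XᵀAX` and `S` the sum in the denominator, the `i`-th block of `WᵀXw` has squared
norm at least `σ_min(W_iᵀX)² ‖w‖²` and sits on eigenvalues at least `λ_{ik}`, which gives the
coercivity `S ‖w‖² ≤ wᵀBw`. Coercivity yields `vᵀB⁻¹v ≤ ‖v‖² / S`, and for `u = XB⁻¹v` one has
`‖Au‖² ≤ λ₁ uᵀAu = λ₁ vᵀB⁻¹v`. -/

open Matrix

/-- The spectral norm (largest singular value) of a real matrix,
as the `ℓ²→ℓ²` operator norm. -/
noncomputable def matSpectralNorm {m n : ℕ} (M : Matrix (Fin m) (Fin n) ℝ) : ℝ :=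
  ‖LinearMap.toContinuousLinearMap (Matrix.toEuclideanLin M)‖

/-- The smallest singular value of a square real matrix: `σ_min(M) = min_{‖x‖=1} ‖Mx‖`. -/
noncomputable def sigmaMin {n : ℕ} (M : Matrix (Fin n) (Fin n) ℝ) : ℝ :=
  ⨅ x : Metric.sphere (0 : EuclideanSpace ℝ (Fin n)) 1,
    ‖Matrix.toEuclideanLin M (x : EuclideanSpace ℝ (Fin n))‖

section Eigendecomposition

variable {R ι : Type*} [CommRing R] [Fintype ι] [DecidableEq ι]

lemma dotProduct_mulVec_eigendecomp (W : Matrix ι ι R) (d u : ι → R) :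
    u ⬝ᵥ (W * diagonal d * Wᵀ) *ᵥ u = ∑ t, d t * (Wᵀ *ᵥ u) t ^ 2 := by
  rw [← mulVec_mulVec, ← mulVec_mulVec, dotProduct_mulVec, ← mulVec_transpose]
  simp only [dotProduct, mulVec_diagonal]
  exact Finset.sum_congr rfl fun t _ => by ring

lemma mulVec_dotProduct_self_eigendecomp {W : Matrix ι ι R} (hW : Wᵀ * W = 1) (d u : ι → R) :
    (W * diagonal d * Wᵀ) *ᵥ u ⬝ᵥ (W * diagonal d * Wᵀ) *ᵥ u =
      ∑ t, (d t * (Wᵀ *ᵥ u) t) ^ 2 := by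
  have hWz : ∀ z, W *ᵥ z ⬝ᵥ W *ᵥ z = z ⬝ᵥ z := fun z => by
    rw [dotProduct_mulVec, ← mulVec_transpose, mulVec_mulVec, hW, one_mulVec]
  rw [← mulVec_mulVec, ← mulVec_mulVec, hWz]
  simp only [dotProduct, mulVec_diagonal]
  exact Finset.sum_congr rfl fun t _ => by ring

end Eigendecomposition

lemma mulVec_dotProduct_self_le_eigendecomp {ι : Type*} [Fintype ι] [DecidableEq ι]
    {W : Matrix ι ι ℝ} (hW : Wᵀ * W = 1) {d : ι → ℝ} {L : ℝ} (hd0 : ∀ t, 0 ≤ d t)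
    (hdL : ∀ t, d t ≤ L) (u : ι → ℝ) :
    (W * diagonal d * Wᵀ) *ᵥ u ⬝ᵥ (W * diagonal d * Wᵀ) *ᵥ u ≤
      L * (u ⬝ᵥ (W * diagonal d * Wᵀ) *ᵥ u) := by
  rw [mulVec_dotProduct_self_eigendecomp hW, dotProduct_mulVec_eigendecomp, Finset.mul_sum]
  refine Finset.sum_le_sum fun t _ => ?_
  calc (d t * (Wᵀ *ᵥ u) t) ^ 2 = d t * (d t * (Wᵀ *ᵥ u) t ^ 2) := by ring
    _ ≤ L * (d t * (Wᵀ *ᵥ u) t ^ 2) :=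
      mul_le_mul_of_nonneg_right (hdL t) (mul_nonneg (hd0 t) (sq_nonneg _))

lemma dotProduct_mulVec_transpose_mul_mul {m n R : Type*} [Fintype m] [Fintype n] [CommRing R]
    (A : Matrix n n R) (X : Matrix n m R) (w : m → R) :
    w ⬝ᵥ (Xᵀ * A * X) *ᵥ w = X *ᵥ w ⬝ᵥ A *ᵥ (X *ᵥ w) := by
  rw [← mulVec_mulVec, ← mulVec_mulVec, dotProduct_mulVec, vecMul_transpose]

lemma mul_dotProduct_inv_mulVec_le {κ : Type*} [Fintype κ] [DecidableEq κ] {B : Matrix κ κ ℝ}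
    (hB : IsUnit B) {S : ℝ} (hS : 0 < S) (hcoer : ∀ w, S * (w ⬝ᵥ w) ≤ w ⬝ᵥ B *ᵥ w)
    (v : κ → ℝ) : S * (B⁻¹ *ᵥ v ⬝ᵥ v) ≤ v ⬝ᵥ v := by
  set w := B⁻¹ *ᵥ v
  have hBw : B *ᵥ w = v := by
    rw [mulVec_mulVec, mul_nonsing_inv B ((isUnit_iff_isUnit_det B).mp hB), one_mulVec]
  have hwv : S * (w ⬝ᵥ w) ≤ w ⬝ᵥ v := hBw ▸ hcoer w
  -- expand `0 ≤ ‖v - S w‖²`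
  have hsq : 0 ≤ (v - S • w) ⬝ᵥ (v - S • w) := dotProduct_self_star_nonneg _
  simp only [sub_dotProduct, dotProduct_sub, smul_dotProduct, dotProduct_smul, smul_eq_mul,
    dotProduct_comm v w] at hsq
  nlinarith [mul_le_mul_of_nonneg_left hwv hS.le]

lemma dotProduct_self_mulVec_mul_inv_le {m n : Type*} [Fintype m] [Fintype n] [DecidableEq m]
    (A : Matrix n n ℝ) (X : Matrix n m ℝ) {L S : ℝ} (hL : 0 ≤ L)
    (hAL : ∀ u, A *ᵥ u ⬝ᵥ A *ᵥ u ≤ L * (u ⬝ᵥ A *ᵥ u)) (hB : IsUnit (Xᵀ * A * X)) (hS : 0 < S)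
    (hcoer : ∀ w, S * (w ⬝ᵥ w) ≤ w ⬝ᵥ (Xᵀ * A * X) *ᵥ w) (v : m → ℝ) :
    (A * X * (Xᵀ * A * X)⁻¹) *ᵥ v ⬝ᵥ (A * X * (Xᵀ * A * X)⁻¹) *ᵥ v ≤ L / S * (v ⬝ᵥ v) := by
  set B := Xᵀ * A * X
  set w := B⁻¹ *ᵥ v
  have hBw : B *ᵥ w = v := by
    rw [mulVec_mulVec, mul_nonsing_inv B ((isUnit_iff_isUnit_det B).mp hB), one_mulVec]
  have hw : w ⬝ᵥ v ≤ (v ⬝ᵥ v) / S := by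
    rw [le_div_iff₀ hS, mul_comm]
    exact mul_dotProduct_inv_mulVec_le hB hS hcoer v
  calc (A * X * B⁻¹) *ᵥ v ⬝ᵥ (A * X * B⁻¹) *ᵥ v = A *ᵥ (X *ᵥ w) ⬝ᵥ A *ᵥ (X *ᵥ w) := by
        simp only [w, mulVec_mulVec, Matrix.mul_assoc]
    _ ≤ L * (X *ᵥ w ⬝ᵥ A *ᵥ (X *ᵥ w)) := hAL _
    _ = L * (w ⬝ᵥ v) := by rw [← dotProduct_mulVec_transpose_mul_mul, hBw]
    _ ≤ L / S * (v ⬝ᵥ v) := by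
        rw [div_mul_eq_mul_div, mul_div_assoc]
        exact mul_le_mul_of_nonneg_left hw hL

lemma EuclideanSpace.real_norm_sq_eq_dotProduct {ι : Type*} [Fintype ι]
    (x : EuclideanSpace ℝ ι) : ‖x‖ ^ 2 = x.ofLp ⬝ᵥ x.ofLp := by
  rw [← real_inner_self_eq_norm_sq]
  rfl

lemma matSpectralNorm_le_of_dotProduct_le {m n : ℕ} (M : Matrix (Fin m) (Fin n) ℝ) {C : ℝ}
    (hC : 0 ≤ C) (h : ∀ v, M *ᵥ v ⬝ᵥ M *ᵥ v ≤ C ^ 2 * (v ⬝ᵥ v)) : matSpectralNorm M ≤ C := by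
  refine ContinuousLinearMap.opNorm_le_bound
    (LinearMap.toContinuousLinearMap (toEuclideanLin M)) hC fun x => ?_
  refine le_of_sq_le_sq ?_ (mul_nonneg hC (norm_nonneg x))
  rw [mul_pow, EuclideanSpace.real_norm_sq_eq_dotProduct,
    EuclideanSpace.real_norm_sq_eq_dotProduct]
  exact h x.ofLp

lemma sigmaMin_nonneg {m : ℕ} (M : Matrix (Fin m) (Fin m) ℝ) : 0 ≤ sigmaMin M :=
  Real.iInf_nonneg fun _ => norm_nonneg _

lemma sigmaMin_mul_norm_le {m : ℕ} (M : Matrix (Fin m) (Fin m) ℝ) (x : EuclideanSpace ℝ (Fin m)) :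
    sigmaMin M * ‖x‖ ≤ ‖toEuclideanLin M x‖ := by
  rcases eq_or_ne x 0 with rfl | hx
  · simp
  have hunit : ‖x‖⁻¹ • x ∈ Metric.sphere (0 : EuclideanSpace ℝ (Fin m)) 1 := by
    simp [norm_smul, hx]
  have h : sigmaMin M ≤ ‖toEuclideanLin M (‖x‖⁻¹ • x)‖ :=
    ciInf_le ⟨0, Set.forall_mem_range.2 fun _ => norm_nonneg _⟩
      (⟨_, hunit⟩ : Metric.sphere (0 : EuclideanSpace ℝ (Fin m)) 1)
  rw [LinearMap.map_smul, norm_smul, norm_inv, norm_norm,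
    le_inv_mul_iff₀ (norm_pos_iff.2 hx)] at h
  rwa [mul_comm]

lemma sigmaMin_sq_mul_dotProduct_self_le {m : ℕ} (M : Matrix (Fin m) (Fin m) ℝ) (v : Fin m → ℝ) :
    sigmaMin M ^ 2 * (v ⬝ᵥ v) ≤ M *ᵥ v ⬝ᵥ M *ᵥ v := by
  have h := pow_le_pow_left₀ (mul_nonneg (sigmaMin_nonneg M) (norm_nonneg _))
    (sigmaMin_mul_norm_le M (WithLp.toLp 2 v)) 2
  rwa [mul_pow, EuclideanSpace.real_norm_sq_eq_dotProduct,
    EuclideanSpace.real_norm_sq_eq_dotProduct] at h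

section Blocks

variable {n k j : ℕ} (hjk : j * k ≤ n)

def blockIndex (i : Fin j) (s : Fin k) : Fin n :=
  ⟨i * k + s, by
    have := Nat.mul_le_mul_right k i.isLt
    rw [Nat.succ_mul] at this
    omega⟩

lemma blockIndex_injective :
    Function.Injective fun p : Fin j × Fin k => blockIndex hjk p.1 p.2 := by
  intro p q h
  apply finProdFinEquiv.injective
  have := congrArg Fin.val h
  ext
  simp only [blockIndex, finProdFinEquiv, Equiv.coe_fn_mk] at this ⊢
  linarith

lemma sum_blockIndex_le {f : Fin n → ℝ} (hf : ∀ t, 0 ≤ f t) :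
    ∑ i, ∑ s, f (blockIndex hjk i s) ≤ ∑ t, f t := by
  rw [← Fintype.sum_prod_type']
  exact (Finset.sum_map _ ⟨_, blockIndex_injective hjk⟩ f).symm.trans_le
    (Finset.sum_le_sum_of_subset_of_nonneg (Finset.subset_univ _) fun t _ _ => hf t)

lemma sum_mul_le_of_le_sum_blockIndex (hk : 0 < k) {lam f : Fin n → ℝ} (hlam : Antitone lam)
    (hlam0 : ∀ t, 0 ≤ lam t) (hf : ∀ t, 0 ≤ f t) (a : Fin j → ℝ)
    (ha : ∀ i, a i ≤ ∑ s, f (blockIndex hjk i s)) :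
    ∑ i, lam (blockIndex hjk i ⟨k - 1, by omega⟩) * a i ≤ ∑ t, lam t * f t := by
  calc ∑ i, lam (blockIndex hjk i ⟨k - 1, by omega⟩) * a i
      ≤ ∑ i, ∑ s, lam (blockIndex hjk i s) * f (blockIndex hjk i s) := by
        refine Finset.sum_le_sum fun i _ => ?_
        refine (mul_le_mul_of_nonneg_left (ha i) (hlam0 _)).trans ?_
        rw [Finset.mul_sum]
        refine Finset.sum_le_sum fun s _ => mul_le_mul_of_nonneg_right (hlam ?_) (hf _)
        simp only [blockIndex, Fin.mk_le_mk]
        omega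
    _ ≤ ∑ t, lam t * f t := sum_blockIndex_le hjk fun t => mul_nonneg (hlam0 t) (hf t)

end Blocks

/-- Let `A = W Λ Wᵀ` with `W` orthogonal and `Λ = diag(λ_1,…,λ_n)`,
`λ_1 ≥ … ≥ λ_n ≥ 0`. For `1 ≤ i ≤ j` (with `jk ≤ n`), let `W_i ∈ ℝ^{n×k}` consist of
columns `(i−1)k+1, …, ik` of `W`. If `X ∈ ℝ^{n×k}` is such that `XᵀAX` is invertible
and `Σ_{i=1}^{j} λ_{ik} σ_min(W_iᵀX)² > 0`, then
`‖A X (XᵀAX)⁻¹‖₂ ≤ λ_1^{1/2} / (Σ_{i=1}^{j} λ_{ik} σ_min(W_iᵀX)²)^{1/2}`. -/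
theorem stmt4 {n k j : ℕ} (hk : 1 ≤ k) (hj : 1 ≤ j) (hjk : j * k ≤ n)
    (A : Matrix (Fin n) (Fin n) ℝ)
    (lam : Fin n → ℝ) (hlam : Antitone lam) (hlam0 : ∀ i, 0 ≤ lam i)
    (W : Matrix (Fin n) (Fin n) ℝ) (hW : Wᵀ * W = 1)
    (hAeig : A = W * Matrix.diagonal lam * Wᵀ)
    (Wsub : Fin j → Matrix (Fin n) (Fin k) ℝ)
    (hWsub : ∀ (i : Fin j) (t : Fin n) (s : Fin k) (h : i.val * k + s.val < n),
      Wsub i t s = W t ⟨i.val * k + s.val, h⟩)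
    (X : Matrix (Fin n) (Fin k) ℝ)
    (hXAX : IsUnit (Xᵀ * A * X))
    (hpos : 0 < ∑ i : Fin j,
        lam ⟨i.val * k + (k - 1), by
            have h0 : i.val + 1 ≤ j := i.isLt
            have h1 : (i.val + 1) * k ≤ j * k := Nat.mul_le_mul_right k h0
            have h2 : (i.val + 1) * k = i.val * k + k := by ring
            omega⟩ *
          (sigmaMin ((Wsub i)ᵀ * X)) ^ 2) :
    matSpectralNorm (A * X * (Xᵀ * A * X)⁻¹) ≤
      Real.sqrt (lam ⟨0, by have := Nat.mul_le_mul hj hk; omega⟩) /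
        Real.sqrt (∑ i : Fin j,
          lam ⟨i.val * k + (k - 1), by
              have h0 : i.val + 1 ≤ j := i.isLt
              have h1 : (i.val + 1) * k ≤ j * k := Nat.mul_le_mul_right k h0
              have h2 : (i.val + 1) * k = i.val * k + k := by ring
              omega⟩ *
            (sigmaMin ((Wsub i)ᵀ * X)) ^ 2) := by
  have hn : 0 < n := by have := Nat.mul_le_mul hj hk; omega
  have hWsub' : ∀ i u s, ((Wsub i)ᵀ *ᵥ u) s = (Wᵀ *ᵥ u) (blockIndex hjk i s) := by
    intro i u s
    simp only [mulVec, dotProduct, transpose_apply]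
    exact Finset.sum_congr rfl fun t _ => by rw [hWsub]; rfl
  have hcoer : ∀ w, (∑ i : Fin j, lam (blockIndex hjk i ⟨k - 1, by omega⟩) *
      sigmaMin ((Wsub i)ᵀ * X) ^ 2) * (w ⬝ᵥ w) ≤ w ⬝ᵥ (Xᵀ * A * X) *ᵥ w := by
    intro w
    rw [dotProduct_mulVec_transpose_mul_mul, hAeig, dotProduct_mulVec_eigendecomp, Finset.sum_mul]
    simp only [mul_assoc]
    refine sum_mul_le_of_le_sum_blockIndex hjk hk hlam hlam0 (fun t => sq_nonneg _) _ fun i => ?_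
    calc sigmaMin ((Wsub i)ᵀ * X) ^ 2 * (w ⬝ᵥ w)
        ≤ ((Wsub i)ᵀ * X) *ᵥ w ⬝ᵥ ((Wsub i)ᵀ * X) *ᵥ w := sigmaMin_sq_mul_dotProduct_self_le _ _
      _ = ∑ s, (Wᵀ *ᵥ (X *ᵥ w)) (blockIndex hjk i s) ^ 2 := by
        simp only [dotProduct, ← mulVec_mulVec, hWsub', sq]
  have hAL : ∀ u, A *ᵥ u ⬝ᵥ A *ᵥ u ≤ lam ⟨0, hn⟩ * (u ⬝ᵥ A *ᵥ u) :=
    hAeig ▸ mulVec_dotProduct_self_le_eigendecomp hW hlam0 fun t => hlam (Nat.zero_le t.val)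
  rw [← Real.sqrt_div' _ hpos.le]
  refine matSpectralNorm_le_of_dotProduct_le _ (Real.sqrt_nonneg _) fun v => ?_
  rw [Real.sq_sqrt (div_nonneg (hlam0 _) hpos.le)]
  exact dotProduct_self_mulVec_mul_inv_le A X (hlam0 _) hAL hXAX hpos hcoer v
end

section
/- Under the preconditioner setup: λ_min( P̂^{-1/2} (A + μI) P̂^{-1/2} ) ≥ μ − ‖ℰ‖₂. -/
open Matrix

/-- The largest eigenvalue of a real symmetric matrix, as the supremum of the
Rayleigh quotient over the unit sphere. -/
noncomputable def lmax {n : ℕ} (M : Matrix (Fin n) (Fin n) ℝ) : ℝ :=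
  ⨆ x : Metric.sphere (0 : EuclideanSpace ℝ (Fin n)) 1,
    (inner ℝ (x : EuclideanSpace ℝ (Fin n))
      (Matrix.toEuclideanLin M (x : EuclideanSpace ℝ (Fin n))) : ℝ)

/-- The smallest eigenvalue of a real symmetric matrix, as the infimum of the
Rayleigh quotient over the unit sphere. -/
noncomputable def lmin {n : ℕ} (M : Matrix (Fin n) (Fin n) ℝ) : ℝ :=
  ⨅ x : Metric.sphere (0 : EuclideanSpace ℝ (Fin n)) 1,
    (inner ℝ (x : EuclideanSpace ℝ (Fin n))
      (Matrix.toEuclideanLin M (x : EuclideanSpace ℝ (Fin n))) : ℝ)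

open scoped ComplexOrder in
/-- The positive semidefinite square root of a positive semidefinite matrix
(the definition of `Matrix.PosSemidef.sqrt` from the older Mathlib, since removed). -/
noncomputable def Matrix.PosSemidef.sqrt {n 𝕜 : Type*} [Fintype n] [DecidableEq n] [RCLike 𝕜]
    {A : Matrix n n 𝕜} (hA : A.PosSemidef) : Matrix n n 𝕜 :=
  hA.1.eigenvectorUnitary.1 * diagonal ((↑) ∘ (√·) ∘ hA.1.eigenvalues) *
    (star hA.1.eigenvectorUnitary : Matrix n n 𝕜)

/-!
The matrix `P̂⁻¹ = I − ÛÛᵀ + (λ̂_k + μ) Û(Θ̂ + μI)⁻¹Ûᵀ` has the explicit inverse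
`P̂ = I − ÛÛᵀ + (λ̂_k + μ)⁻¹ Û(Θ̂ + μI)Ûᵀ`, and `Â_N + μI = c Û(Θ̂ + μI)Ûᵀ + μP̂` with
`c = λ̂_k / (λ̂_k + μ) ≥ 0`. Hence `A + μI − μP̂ − ℰ = c Û(Θ̂ + μI)Ûᵀ + E ⪰ 0`. Conjugating by
`S = P̂^{-1/2}`, for which `S P̂ S = I`, gives `vᵀS(A + μI)Sv ≥ μ‖v‖² + wᵀℰw` with `w = Sv`.
Finally `‖w‖² = vᵀP̂⁻¹v ≤ ‖v‖²`, since `I − P̂⁻¹ = Û(I − (λ̂_k + μ)(Θ̂ + μI)⁻¹)Ûᵀ ⪰ 0` by the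
ordering `λ̂_i ≥ λ̂_k`; so `wᵀℰw ≥ −‖ℰ‖₂ ‖v‖²`.
-/

namespace Matrix.PosSemidef

open scoped ComplexOrder

variable {m 𝕜 : Type*} [Fintype m] [DecidableEq m] [RCLike 𝕜] {A : Matrix m m 𝕜}

lemma sqrt_mul_self (hA : A.PosSemidef) : hA.sqrt * hA.sqrt = A := by
  have hdiag : diagonal ((↑) ∘ (√·) ∘ hA.1.eigenvalues : m → 𝕜) *
      diagonal ((↑) ∘ (√·) ∘ hA.1.eigenvalues) = diagonal ((↑) ∘ hA.1.eigenvalues) := by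
    rw [diagonal_mul_diagonal]
    congr 1
    funext i
    simp [← RCLike.ofReal_mul, Real.mul_self_sqrt (hA.eigenvalues_nonneg i)]
  conv_rhs => rw [hA.1.spectral_theorem, Unitary.conjStarAlgAut_apply]
  simp only [sqrt, Matrix.mul_assoc]
  rw [← Matrix.mul_assoc (star _ : Matrix m m 𝕜), Unitary.coe_star_mul_self, Matrix.one_mul,
    ← Matrix.mul_assoc _ _ (star _ : Matrix m m 𝕜), hdiag]

lemma conjTranspose_sqrt (hA : A.PosSemidef) : hA.sqrtᴴ = hA.sqrt := by
  simp only [sqrt, conjTranspose_mul, diagonal_conjTranspose, star_eq_conjTranspose,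
    conjTranspose_conjTranspose, Matrix.mul_assoc]
  congr 3
  ext i
  simp

end Matrix.PosSemidef

section QuadraticForm

variable {n : ℕ}

lemma inner_toEuclideanLin_self (M : Matrix (Fin n) (Fin n) ℝ) (x : EuclideanSpace ℝ (Fin n)) :
    inner ℝ x (toEuclideanLin M x) = x.ofLp ⬝ᵥ (M *ᵥ x.ofLp) := by
  simp [EuclideanSpace.inner_eq_star_dotProduct, dotProduct_comm]

lemma dotProduct_self_ofLp (x : EuclideanSpace ℝ (Fin n)) : x.ofLp ⬝ᵥ x.ofLp = ‖x‖ ^ 2 := by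
  rw [← real_inner_self_eq_norm_sq, EuclideanSpace.inner_eq_star_dotProduct, star_trivial]

-- For `n = 0` the sphere is empty and `lmin` takes the junk value `0`.
lemma le_lmin_of_forall_dotProduct_mulVec (hn : 0 < n) {M : Matrix (Fin n) (Fin n) ℝ} {c : ℝ}
    (h : ∀ v : Fin n → ℝ, v ⬝ᵥ v = 1 → c ≤ v ⬝ᵥ (M *ᵥ v)) : c ≤ lmin M := by
  have : Nonempty (Fin n) := ⟨⟨0, hn⟩⟩
  have : Nonempty (Metric.sphere (0 : EuclideanSpace ℝ (Fin n)) 1) :=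
    (NormedSpace.sphere_nonempty.mpr zero_le_one).to_subtype
  refine le_ciInf fun ⟨x, hx⟩ => ?_
  rw [inner_toEuclideanLin_self]
  refine h _ ?_
  rw [dotProduct_self_ofLp, mem_sphere_zero_iff_norm.mp hx, one_pow]

lemma neg_matSpectralNorm_mul_le_dotProduct_mulVec (M : Matrix (Fin n) (Fin n) ℝ)
    (v : Fin n → ℝ) : -(matSpectralNorm M * (v ⬝ᵥ v)) ≤ v ⬝ᵥ (M *ᵥ v) := by
  set x : EuclideanSpace ℝ (Fin n) := WithLp.toLp 2 v
  have hnorm : ‖x‖ ^ 2 = v ⬝ᵥ v := (dotProduct_self_ofLp x).symm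
  have hop : ‖toEuclideanLin M x‖ ≤ matSpectralNorm M * ‖x‖ :=
    (LinearMap.toContinuousLinearMap (toEuclideanLin M)).le_opNorm x
  have hcs : |inner ℝ x (toEuclideanLin M x)| ≤ matSpectralNorm M * ‖x‖ ^ 2 :=
    calc |inner ℝ x (toEuclideanLin M x)| ≤ ‖x‖ * ‖toEuclideanLin M x‖ :=
          abs_real_inner_le_norm _ _
      _ ≤ ‖x‖ * (matSpectralNorm M * ‖x‖) := by gcongr
      _ = matSpectralNorm M * ‖x‖ ^ 2 := by ring
  rw [inner_toEuclideanLin_self, hnorm] at hcs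
  exact neg_le_of_abs_le hcs

end QuadraticForm

lemma Matrix.dotProduct_mulVec_mul_mul_of_transpose_eq_self {m R : Type*} [Fintype m]
    [CommSemiring R] {S : Matrix m m R} (hS : Sᵀ = S) (Y : Matrix m m R) (v : m → R) :
    v ⬝ᵥ ((S * Y * S) *ᵥ v) = (S *ᵥ v) ⬝ᵥ (Y *ᵥ (S *ᵥ v)) := by
  have hvS : v ᵥ* S = S *ᵥ v := by rw [← vecMul_transpose, hS]
  rw [← mulVec_mulVec, ← mulVec_mulVec, dotProduct_mulVec v S, hvS]

section DiagonalInverse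

variable {m K : Type*} [Fintype m] [DecidableEq m] [Field K] {d : m → K}

lemma Matrix.diagonal_inv_mul_diagonal (hd : ∀ i, d i ≠ 0) : diagonal d⁻¹ * diagonal d = 1 := by
  rw [diagonal_mul_diagonal, ← diagonal_one]
  exact congrArg diagonal (funext fun i => inv_mul_cancel₀ (hd i))

lemma Matrix.inv_diagonal_of_ne_zero (hd : ∀ i, d i ≠ 0) : (diagonal d)⁻¹ = diagonal d⁻¹ :=
  inv_eq_left_inv (diagonal_inv_mul_diagonal hd)

end DiagonalInverse

lemma Matrix.posSemidef_mul_diagonal_mul_transpose {m k : Type*} [Fintype m] [Fintype k]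
    [DecidableEq k] (U : Matrix m k ℝ) {d : k → ℝ} (hd : ∀ i, 0 ≤ d i) :
    (U * diagonal d * Uᵀ).PosSemidef := by
  simpa using (PosSemidef.diagonal hd).mul_mul_conjTranspose_same U

lemma mul_mul_transpose_add_smul_one_eq {m k K : Type*} [Fintype k] [DecidableEq m] [DecidableEq k]
    [Field K] (U : Matrix m k K) (T : Matrix k k K) {l μ : K}
    (h : l + μ ≠ 0) :
    U * T * Uᵀ + μ • 1 = (l / (l + μ)) • (U * (T + μ • 1) * Uᵀ) +
      μ • (1 - U * Uᵀ + (l + μ)⁻¹ • (U * (T + μ • 1) * Uᵀ)) := by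
  simp only [Matrix.mul_add, Matrix.add_mul, Matrix.mul_smul, Matrix.smul_mul, Matrix.mul_one]
  match_scalars <;> field_simp
  ring

lemma precondInv_mul_precond {m k K : Type*} [Fintype m] [Fintype k] [DecidableEq m]
    [DecidableEq k] [Field K] {U : Matrix m k K} (hU : Uᵀ * U = 1) {B : Matrix k k K}
    (hB : B⁻¹ * B = 1) {a : K} (ha : a ≠ 0) :
    (1 - U * Uᵀ + a • (U * B⁻¹ * Uᵀ)) * (1 - U * Uᵀ + a⁻¹ • (U * B * Uᵀ)) = 1 := by
  have hmul (X Y : Matrix k k K) : U * X * Uᵀ * (U * Y * Uᵀ) = U * (X * Y) * Uᵀ := by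
    simp only [Matrix.mul_assoc, ← Matrix.mul_assoc Uᵀ U, hU, Matrix.one_mul]
  have hWW : U * Uᵀ * (U * Uᵀ) = U * Uᵀ := by simpa using hmul 1 1
  have hWB : U * Uᵀ * (U * B * Uᵀ) = U * B * Uᵀ := by simpa using hmul 1 B
  have hBW : U * B⁻¹ * Uᵀ * (U * Uᵀ) = U * B⁻¹ * Uᵀ := by simpa using hmul B⁻¹ 1
  have hBB : U * B⁻¹ * Uᵀ * (U * B * Uᵀ) = U * Uᵀ := by simpa [hB] using hmul B⁻¹ B
  simp only [Matrix.add_mul, Matrix.mul_add, Matrix.sub_mul, Matrix.mul_sub, Matrix.one_mul,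
    Matrix.mul_one, Matrix.smul_mul, Matrix.mul_smul, hWW, hWB, hBW, hBB]
  simp only [smul_add, smul_sub, smul_smul, inv_mul_cancel₀ ha, one_smul]
  abel

lemma posSemidef_one_sub_precondInv {m k : Type*} [Fintype m] [Fintype k] [DecidableEq m]
    [DecidableEq k] (U : Matrix m k ℝ) {d : k → ℝ} {a : ℝ} (ha : 0 < a) (hd : ∀ i, a ≤ d i) :
    (1 - (1 - U * Uᵀ + a • (U * (diagonal d)⁻¹ * Uᵀ))).PosSemidef := by
  have hd0 (i : k) : 0 < d i := ha.trans_le (hd i)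
  have hdiag : 1 - (1 - U * Uᵀ + a • (U * (diagonal d)⁻¹ * Uᵀ)) =
      U * diagonal (fun i => 1 - a * (d i)⁻¹) * Uᵀ := by
    have hd : diagonal (fun i => 1 - a * (d i)⁻¹) = 1 - a • diagonal d⁻¹ := by
      rw [← diagonal_one, ← diagonal_smul, ← diagonal_sub]
      rfl
    rw [inv_diagonal_of_ne_zero fun i => (hd0 i).ne', hd, Matrix.mul_sub, Matrix.sub_mul,
      Matrix.mul_one, Matrix.mul_smul, Matrix.smul_mul]
    abel
  rw [hdiag]
  refine posSemidef_mul_diagonal_mul_transpose U fun i => ?_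
  rw [sub_nonneg, ← div_eq_mul_inv, div_le_one (hd0 i)]
  exact hd i

lemma le_lmin_mul_mul_of_posSemidef {n : ℕ} (hn : 0 < n) {S Q P X Err : Matrix (Fin n) (Fin n) ℝ}
    {μ : ℝ} (hS : Sᵀ = S) (hSS : S * S = Q) (hQP : Q * P = 1) (hQ : (1 - Q).PosSemidef)
    (hX : (X - μ • P - Err).PosSemidef) : μ - matSpectralNorm Err ≤ lmin (S * X * S) := by
  have hSPS : S * P * S = 1 := mul_eq_one_comm.mp (by rw [← Matrix.mul_assoc, hSS, hQP])
  refine le_lmin_of_forall_dotProduct_mulVec hn fun v hv => ?_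
  set w := S *ᵥ v
  have hconj := dotProduct_mulVec_mul_mul_of_transpose_eq_self hS (v := v)
  have hwP : w ⬝ᵥ (P *ᵥ w) = 1 := by rw [← hconj, hSPS, one_mulVec, hv]
  have hww : w ⬝ᵥ w ≤ 1 := by
    have h := hQ.dotProduct_mulVec_nonneg v
    have hQ1 : Q = S * 1 * S := by rw [Matrix.mul_one, hSS]
    rw [star_trivial, sub_mulVec, dotProduct_sub, one_mulVec, hv, hQ1, hconj, one_mulVec] at h
    linarith
  have hnorm : 0 ≤ matSpectralNorm Err := norm_nonneg _
  have hXw := hX.dotProduct_mulVec_nonneg w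
  rw [star_trivial, sub_mulVec, sub_mulVec, dotProduct_sub, dotProduct_sub, smul_mulVec,
    dotProduct_smul, hwP, smul_eq_mul] at hXw
  calc μ - matSpectralNorm Err ≤ μ - matSpectralNorm Err * (w ⬝ᵥ w) := by
        linarith [mul_le_of_le_one_right hnorm hww]
    _ ≤ μ + w ⬝ᵥ (Err *ᵥ w) := by linarith [neg_matSpectralNorm_mul_le_dotProduct_mulVec Err w]
    _ ≤ w ⬝ᵥ (X *ᵥ w) := by linarith
    _ = v ⬝ᵥ ((S * X * S) *ᵥ v) := (hconj X).symm

/-- Preconditioner setup: `n > k ≥ 1`, `A` real symmetric with `A + μI` positive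
definite (`μ ≥ 0`), `Û` with orthonormal columns (`ÛᵀÛ = I`),
`Θ̂ = diag(λ̂_1,…,λ̂_k)` with `λ̂_1 ≥ … ≥ λ̂_k > 0`, `Â_N = Û Θ̂ Ûᵀ`,
`A = Â_N + E + ℰ` with `E, ℰ` symmetric and `E` positive semidefinite, and
`P̂⁻¹ = I − ÛÛᵀ + (λ̂_k + μ) Û (Θ̂ + μI)⁻¹ Ûᵀ`, which is symmetric positive definite;
`P̂^{-1/2}` is its positive semidefinite square root.
Then `λ_min(P̂^{-1/2}(A + μI)P̂^{-1/2}) ≥ μ − ‖ℰ‖₂`. -/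
theorem stmt13 {n k : ℕ} (hk : 1 ≤ k) (hkn : k < n)
    (A : Matrix (Fin n) (Fin n) ℝ)
    (μ : ℝ) (hμ : 0 ≤ μ)
    (U : Matrix (Fin n) (Fin k) ℝ) (hU : Uᵀ * U = 1)
    (lamh : Fin k → ℝ) (hlamh : Antitone lamh) (hlamhk : 0 < lamh ⟨k - 1, by omega⟩)
    (E Err : Matrix (Fin n) (Fin n) ℝ)
    (hEpsd : E.PosSemidef)
    (hsum : A = U * Matrix.diagonal lamh * Uᵀ + E + Err)
    (hPinvPD : ((1 : Matrix (Fin n) (Fin n) ℝ) - U * Uᵀ +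
      (lamh ⟨k - 1, by omega⟩ + μ) • (U * (Matrix.diagonal lamh + μ • 1)⁻¹ * Uᵀ)).PosDef)
     :
    let S := hPinvPD.posSemidef.sqrt
    let M := S * (A + μ • 1) * S
    μ - matSpectralNorm Err ≤ lmin M := by
  intro S M
  have hl_le (i : Fin k) : lamh ⟨k - 1, by omega⟩ ≤ lamh i :=
    hlamh (Fin.le_def.2 (Nat.le_sub_one_of_lt i.2))
  have hpos (i : Fin k) : 0 < lamh i + μ := by linarith [hl_le i]
  have hBdiag : diagonal lamh + μ • (1 : Matrix (Fin k) (Fin k) ℝ) =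
      diagonal (fun i => lamh i + μ) := by
    rw [smul_one_eq_diagonal, diagonal_add]
  have hB : (diagonal lamh + μ • 1)⁻¹ * (diagonal lamh + μ • 1) = 1 := by
    rw [hBdiag, inv_diagonal_of_ne_zero fun i => (hpos i).ne']
    exact diagonal_inv_mul_diagonal fun i => (hpos i).ne'
  refine le_lmin_mul_mul_of_posSemidef (by omega) ?_ hPinvPD.posSemidef.sqrt_mul_self
    (precondInv_mul_precond hU hB (by positivity)) ?_ ?_
  · rw [← conjTranspose_eq_transpose_of_trivial]
    exact hPinvPD.posSemidef.conjTranspose_sqrt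
  · rw [hBdiag]
    exact posSemidef_one_sub_precondInv U (by positivity) fun i => by linarith [hl_le i]
  · have hV : (U * (diagonal lamh + μ • 1) * Uᵀ).PosSemidef := by
      rw [hBdiag]
      exact posSemidef_mul_diagonal_mul_transpose U fun i => (hpos i).le
    have hdecomp := mul_mul_transpose_add_smul_one_eq U (diagonal lamh) (hpos ⟨k - 1, by omega⟩).ne'
    convert (hV.smul (div_nonneg hlamhk.le (hpos ⟨k - 1, by omega⟩).le)).add hEpsd using 1
    rw [hsum]
    linear_combination (norm := module) hdecomp
end
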